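/- Let p ∈ L be divisible by u and such that z⁻ʲ·p is V-holomorphic, and define H⁰_m(p) and H¹_m(p) as in the Čech description of End E on the m-th infinitesimal neighbourhood. Then the sequence m ↦ dim_ℂ H¹_m(p) is eventually constant, with limit h¹(p) (the dimension of H¹ of End E on Z_k), the sequence m ↦ dim_ℂ H⁰_m(0) − dim_ℂ H⁰_m(p) is eventually constant, with limit Δ(p) ≥ 0, and one has the identity Δ(p) + h¹(p) = h¹(0), i.e. h¹(0) − h¹(p) = lim_m (dim H⁰_m(0) − dim H⁰_m(p)). -/

import Mathlib

noncomputable section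

/-- `L = ℂ[z,z⁻¹][u]`: Laurent polynomials in `z` with polynomial coefficients in `u`,
realised as the algebra of finitely supported ℂ-linear combinations of monomials on the
exponent monoid `ℤ × ℕ`, where `(s, r)` is the exponent of the monomial `zˢuʳ`. -/
abbrev L : Type := AddMonoidAlgebra ℂ (ℤ × ℕ)

/-- The monomial `zˢ` (`s ∈ ℤ`). -/
def zp (s : ℤ) : L := AddMonoidAlgebra.single (s, 0) 1

/-- The monomial `u`. -/
def uu : L := AddMonoidAlgebra.single (0, 1) 1

/-- `f` is V-holomorphic: every monomial `zˢuʳ` occurring in `f` satisfies `s ≤ k·r`,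
i.e. `f` is holomorphic in the coordinates `(z⁻¹, zᵏu)` of the chart `V` of `Z_k`. -/
def VHol (k : ℕ) (f : L) : Prop := ∀ (s : ℤ) (r : ℕ), f.coeff (s, r) ≠ 0 → s ≤ (k : ℤ) * r

/-- `f` lies in `ℂ[z,u] ⊆ L`, i.e. is holomorphic on the chart `U`. -/
def MemPolyRing (f : L) : Prop := ∀ (s : ℤ) (r : ℕ), f.coeff (s, r) ≠ 0 → 0 ≤ s

/-- The truncation `L_m = L/(u^{m+1})`, the functions on the m-th infinitesimal
neighbourhood of the zero section (over `U ∩ V`). -/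
abbrev Lm (m : ℕ) : Type := L ⧸ Ideal.span {uu ^ (m + 1)}

/-- The quotient map `L → L_m`. -/
def mkm (m : ℕ) : L →+* Lm m := Ideal.Quotient.mk _

/-- V-holomorphy in `L_m`: every monomial `zˢuʳ` with `0 ≤ r ≤ m` occurring in it (i.e. in any
representative) satisfies `s ≤ k·r`. -/
def VHolm (k m : ℕ) (f : Lm m) : Prop :=
  ∀ g : L, mkm m g = f → ∀ (s : ℤ) (r : ℕ), r ≤ m → g.coeff (s, r) ≠ 0 → s ≤ (k : ℤ) * r

/-- `A_m ⊆ L_m`: the image of `ℂ[z,u]`. -/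
def Am (m : ℕ) : Set (Lm m) := {f | ∃ g : L, MemPolyRing g ∧ mkm m g = f}

/-- Quadruples over `L_m`, representing sections `σ = (a,b,c,d)` of `End E` over `U ∩ V`
on the m-th infinitesimal neighbourhood. -/
abbrev Q4 (m : ℕ) : Type := Lm m × Lm m × Lm m × Lm m

/-- `W_m(p)`: quadruples all four entries of whose transform
`S_p σ = (a + zʲp·b + z⁻ʲp·c + p²·d, z²ʲ·b + zʲp·d, z⁻²ʲ·c + z⁻ʲp·d, d)`
are V-holomorphic, i.e. sections of `End E` over `V` on the m-th neighbourhood. -/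
def Wm (k j m : ℕ) (p : L) : Set (Q4 m) :=
  {σ | VHolm k m (σ.1 + mkm m (zp (j : ℤ) * p) * σ.2.1
          + mkm m (zp (-(j : ℤ)) * p) * σ.2.2.1 + mkm m (p * p) * σ.2.2.2) ∧
       VHolm k m (mkm m (zp (2 * (j : ℤ))) * σ.2.1 + mkm m (zp (j : ℤ) * p) * σ.2.2.2) ∧
       VHolm k m (mkm m (zp (-(2 * (j : ℤ)))) * σ.2.2.1
          + mkm m (zp (-(j : ℤ)) * p) * σ.2.2.2) ∧
       VHolm k m σ.2.2.2}

/-- `A_m⁴ ⊆ L_m⁴`: sections of `End E` over `U` on the m-th neighbourhood. -/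
def Am4 (m : ℕ) : Set (Q4 m) := {σ | σ.1 ∈ Am m ∧ σ.2.1 ∈ Am m ∧ σ.2.2.1 ∈ Am m ∧ σ.2.2.2 ∈ Am m}

/-- `H⁰_m(p) = A_m⁴ ∩ W_m(p)` (a ℂ-subspace, realised as the span of that set). -/
def H0m (k j m : ℕ) (p : L) : Submodule ℂ (Q4 m) := Submodule.span ℂ (Am4 m ∩ Wm k j m p)

/-- `H¹_m(p) = L_m⁴ / (A_m⁴ + W_m(p))`. -/
abbrev H1m (k j m : ℕ) (p : L) : Type := Q4 m ⧸ Submodule.span ℂ (Am4 m ∪ Wm k j m p)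

instance : CoeFun L (fun _ => ℤ × ℕ → ℂ) := ⟨fun f => f.coeff⟩

-- basic monomial lemmas
lemma zp_mul_zp (a b : ℤ) : zp a * zp b = zp (a + b) := by
  simp [zp, AddMonoidAlgebra.single_mul_single]

lemma zp_zero : zp 0 = 1 := rfl

lemma zp_mul_apply (t : ℤ) (f : L) (x : ℤ × ℕ) :
    (zp t * f) x = f (x.1 - t, x.2) := by
  classical
  have := AddMonoidAlgebra.coeff_single_mul_eq_mul_coeff (x := f) (r := (1 : ℂ)) (m := (t, 0))
    (m₁ := x) (x.1 - t, x.2)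
    (fun a _ => by
      cases a with
      | mk a1 a2 =>
        cases x with
        | mk x1 x2 =>
          simp [Prod.ext_iff]
          omega)
  simpa [zp] using this

lemma uu_pow (n : ℕ) : uu ^ n = AddMonoidAlgebra.single ((0 : ℤ), n) 1 := by
  rw [uu, AddMonoidAlgebra.single_pow]
  congr 1
  · ext <;> simp
  · simp

-- ### fil / sup machinery
abbrev XX : Type := ℤ × ℕ

def fil (P : XX → Prop) : L →ₗ[ℂ] L :=
  letI := Classical.decPred P
  { toFun := fun f => AddMonoidAlgebra.ofCoeff (f.coeff.filter P)
    map_add' := fun _ _ => by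
      rw [AddMonoidAlgebra.coeff_add, Finsupp.filter_add]; rfl
    map_smul' := fun _ _ => by
      rw [AddMonoidAlgebra.coeff_smul, Finsupp.filter_smul]; rfl }

lemma fil_apply_pos {P : XX → Prop} (f : L) {x : XX} (h : P x) : fil P f x = f x := by
  letI := Classical.decPred P
  exact Finsupp.filter_apply_pos P f.coeff h

lemma fil_apply_neg {P : XX → Prop} (f : L) {x : XX} (h : ¬ P x) : fil P f x = 0 := by
  letI := Classical.decPred P
  exact Finsupp.filter_apply_neg P f.coeff h

def sup (P : XX → Prop) : Submodule ℂ L := AddMonoidAlgebra.supported ℂ ℂ {x | P x}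

lemma mem_sup_iff {P : XX → Prop} {f : L} : f ∈ sup P ↔ ∀ x, ¬ P x → f x = 0 :=
  AddMonoidAlgebra.mem_supported'

lemma sup_mono {P Q : XX → Prop} (h : ∀ x, P x → Q x) : sup P ≤ sup Q :=
  Submodule.comap_mono (Finsupp.supported_mono (fun x hx => h x hx))

lemma fil_mem_sup' {Q : XX → Prop} (P R : XX → Prop) {f : L} (hf : f ∈ sup Q)
    (h : ∀ x, P x → Q x → R x) : fil P f ∈ sup R := by
  rw [mem_sup_iff] at hf ⊢
  intro x hx
  by_cases hP : P x
  · rw [fil_apply_pos _ hP]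
    by_cases hQ : Q x
    · exact absurd (h x hP hQ) hx
    · exact hf x hQ
  · rw [fil_apply_neg _ hP]

lemma fil_mem_sup (P : XX → Prop) (f : L) : fil P f ∈ sup P := by
  rw [mem_sup_iff]
  intro x hx
  rw [fil_apply_neg _ hx]

lemma fil_add_fil_not (P : XX → Prop) (f : L) :
    fil P f + fil (fun x => ¬ P x) f = f := by
  ext x
  rw [AddMonoidAlgebra.coeff_add, Finsupp.add_apply]
  by_cases h : P x
  · rw [fil_apply_pos _ h, fil_apply_neg _ (not_not_intro h), add_zero]
  · rw [fil_apply_neg _ h, fil_apply_pos _ h, zero_add]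

lemma fil_eq_zero_iff {P : XX → Prop} {f : L} : fil P f = 0 ↔ ∀ x, P x → f x = 0 := by
  constructor
  · intro h x hx
    have := congrArg (fun g : L => g x) h
    simpa [fil_apply_pos _ hx] using this
  · intro h
    ext x
    by_cases hx : P x
    · simp [fil_apply_pos _ hx, h x hx]
    · simp [fil_apply_neg _ hx]

lemma fil_eq_zero_of_sup {P Q : XX → Prop} {f : L} (hf : f ∈ sup Q)
    (h : ∀ x, Q x → ¬ P x) : fil P f = 0 := by
  rw [fil_eq_zero_iff]
  intro x hx
  exact (mem_sup_iff.1 hf) x (fun hQ => h x hQ hx)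

lemma fil_of_mem_sup {P : XX → Prop} {f : L} (hf : f ∈ sup P) : fil P f = f := by
  have h := fil_add_fil_not P f
  rwa [fil_eq_zero_of_sup hf (fun x hQ => not_not_intro hQ), add_zero] at h

lemma fil_fil (P Q : XX → Prop) (f : L) :
    fil P (fil Q f) = fil (fun x => P x ∧ Q x) f := by
  ext x
  by_cases hP : P x <;> by_cases hQ : Q x
  · rw [fil_apply_pos _ hP, fil_apply_pos _ hQ, fil_apply_pos _ ⟨hP, hQ⟩]
  · rw [fil_apply_pos _ hP, fil_apply_neg _ hQ, fil_apply_neg (x := x) _ (by tauto)]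
  · rw [fil_apply_neg _ hP, fil_apply_neg (x := x) _ (by tauto)]
  · rw [fil_apply_neg _ hP, fil_apply_neg (x := x) _ (by tauto)]

lemma true_mem_sup (f : L) : f ∈ sup (fun _ => True) := by
  rw [mem_sup_iff]; intro x hx; exact absurd trivial hx

-- products and supports
lemma mul_mem_sup {P Q R : XX → Prop} {f g : L} (hf : f ∈ sup P) (hg : g ∈ sup Q)
    (h : ∀ x y : XX, P x → Q y → R (x + y)) : f * g ∈ sup R := by
  classical
  rw [mem_sup_iff]
  intro x hx
  by_contra hne
  have hmem : x ∈ (f * g).coeff.support := Finsupp.mem_support_iff.2 hne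
  have := AddMonoidAlgebra.support_coeff_mul_subset f g hmem
  rw [Finset.mem_add] at this
  obtain ⟨y, hy, z, hz, rfl⟩ := this
  have hyP : P y := by
    by_contra hyP
    exact (Finsupp.mem_support_iff.1 hy) (mem_sup_iff.1 hf y hyP)
  have hzQ : Q z := by
    by_contra hzQ
    exact (Finsupp.mem_support_iff.1 hz) (mem_sup_iff.1 hg z hzQ)
  exact hx (h y z hyP hzQ)

lemma mul_mem_sup_right {Q R : XX → Prop} (f : L) {g : L} (hg : g ∈ sup Q)
    (h : ∀ x y : XX, Q y → R (x + y)) : f * g ∈ sup R :=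
  mul_mem_sup (true_mem_sup f) hg (fun x y _ hy => h x y hy)

lemma fil_zp_mul_eq_zero_iff (t : ℤ) (Q : XX → Prop) (f : L) :
    fil Q (zp t * f) = 0 ↔ fil (fun x => Q (x.1 + t, x.2)) f = 0 := by
  rw [fil_eq_zero_iff, fil_eq_zero_iff]
  constructor
  · intro h y hy
    have := h (y.1 + t, y.2) (by simpa using hy)
    rwa [zp_mul_apply, add_sub_cancel_right] at this
  · intro h x hx
    rw [zp_mul_apply]
    exact h (x.1 - t, x.2) (by simpa using hx)

lemma fil_mul_trunc {P : XX → Prop} {m : ℕ} (h : ∀ x, P x → x.2 ≤ m) (f g : L) :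
    fil P (f * g) = fil P (f * fil (fun x => x.2 ≤ m) g) := by
  have hg : g = fil (fun x => x.2 ≤ m) g + fil (fun x => ¬ x.2 ≤ m) g :=
    (fil_add_fil_not _ g).symm
  calc fil P (f * g)
      = fil P (f * fil (fun x => x.2 ≤ m) g) + fil P (f * fil (fun x => ¬ x.2 ≤ m) g) := by
        rw [← map_add, ← mul_add, ← hg]
    _ = fil P (f * fil (fun x => x.2 ≤ m) g) := by
        rw [fil_eq_zero_of_sup
          (mul_mem_sup_right f (fil_mem_sup (fun x => ¬ x.2 ≤ m) g)
            (R := fun x => ¬ x.2 ≤ m) (fun x y hy => by simp [Prod.snd_add] at hy ⊢; omega))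
          (fun x hQ => by tauto), add_zero]
-- ### the ideal (u^{m+1}) and the quotient L_m
lemma mem_ideal_iff (m : ℕ) (f : L) :
    f ∈ Ideal.span {uu ^ (m + 1)} ↔ ∀ x : XX, f x ≠ 0 → m + 1 ≤ x.2 := by
  constructor
  · intro hf x hx
    rw [Ideal.mem_span_singleton'] at hf
    obtain ⟨c, rfl⟩ := hf
    rw [uu_pow] at hx
    by_contra hle
    have : c * AddMonoidAlgebra.single ((0:ℤ), m+1) 1 ∈
        sup (fun y => m + 1 ≤ y.2) := by
      refine mul_mem_sup_right (Q := fun y => ((0:ℤ), m+1) = y) c ?_ (fun a b hb => ?_)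
      · rw [mem_sup_iff]
        intro y hy
        rw [AddMonoidAlgebra.coeff_single, Finsupp.single_apply, if_neg hy]
      · subst hb; simp only [Prod.snd_add]; omega
    exact hx (mem_sup_iff.1 this x (by omega))
  · intro hf
    induction f using AddMonoidAlgebra.induction with
    | zero => exact zero_mem _
    | single_add a b f ha hb ih =>
      have hfa : f a = 0 := Finsupp.notMem_support_iff.1 ha
      have hsing : m + 1 ≤ a.2 := by
        refine hf a ?_
        rw [AddMonoidAlgebra.coeff_add, Finsupp.add_apply, AddMonoidAlgebra.coeff_single,
          Finsupp.single_apply, if_pos rfl, hfa, add_zero]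
        exact hb
      refine add_mem ?_ (ih (fun x hx => ?_))
      · rw [Ideal.mem_span_singleton']
        refine ⟨AddMonoidAlgebra.single (a.1, a.2 - (m+1)) b, ?_⟩
        rw [uu_pow, AddMonoidAlgebra.single_mul_single, mul_one]
        congr 1
        ext
        · simp
        · simp; omega
      · refine hf x ?_
        rw [AddMonoidAlgebra.coeff_add, Finsupp.add_apply, AddMonoidAlgebra.coeff_single,
          Finsupp.single_apply]
        have hxa : ¬ a = x := by
          rintro rfl; exact hx hfa
        rw [if_neg hxa, zero_add]
        exact hx

lemma mk_eq_mk_iff (m : ℕ) (f g : L) :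
    mkm m f = mkm m g ↔ ∀ x : XX, x.2 ≤ m → f x = g x := by
  rw [mkm, Ideal.Quotient.mk_eq_mk_iff_sub_mem, mem_ideal_iff]
  constructor
  · intro h x hx
    by_contra hne
    have := h x (by rw [AddMonoidAlgebra.coeff_sub, Finsupp.sub_apply]; exact sub_ne_zero_of_ne hne)
    omega
  · intro h x hx
    by_contra hle
    rw [AddMonoidAlgebra.coeff_sub, Finsupp.sub_apply] at hx
    exact hx (by rw [h x (by omega)]; ring)

lemma mk_eq_zero_iff (m : ℕ) (f : L) :
    mkm m f = 0 ↔ ∀ x : XX, x.2 ≤ m → f x = 0 := by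
  have : (0 : Lm m) = mkm m 0 := by simp [mkm]
  rw [this, mk_eq_mk_iff]
  simp

lemma VHolm_mk_iff (k m : ℕ) (f : L) :
    VHolm k m (mkm m f) ↔ fil (fun x => ¬ x.1 ≤ (k:ℤ) * x.2 ∧ x.2 ≤ m) f = 0 := by
  rw [fil_eq_zero_iff]
  constructor
  · intro h x hx
    by_contra hne
    exact hx.1 (h f rfl x.1 x.2 hx.2 hne)
  · intro h g hg s r hr hne
    by_contra hs
    have hco : g (s, r) = f (s, r) := (mk_eq_mk_iff m g f).1 hg (s, r) hr
    exact hne (by rw [hco]; exact h (s, r) ⟨hs, hr⟩)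

lemma memPolyRing_iff (f : L) : MemPolyRing f ↔ f ∈ sup (fun x => 0 ≤ x.1) := by
  rw [mem_sup_iff]
  constructor
  · intro h x hx
    by_contra hne
    exact hx (h x.1 x.2 hne)
  · intro h s r hne
    by_contra hs
    exact hne (h (s, r) hs)
-- ### region predicates and model submodules
abbrev T4 : Type := L × L × L × L

abbrev nPA : XX → Prop := fun x => ¬ 0 ≤ x.1

abbrev GapP (k j : ℕ) : XX → Prop :=
  fun x => ¬ 0 ≤ x.1 ∧ ¬ (x.1 + 2*(j:ℤ) ≤ (k:ℤ) * x.2)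

abbrev NPV (k m : ℕ) : XX → Prop := fun x => ¬ x.1 ≤ (k:ℤ) * x.2 ∧ x.2 ≤ m
abbrev NPb (k j m : ℕ) : XX → Prop := fun x => ¬ (x.1 + 2*(j:ℤ) ≤ (k:ℤ) * x.2) ∧ x.2 ≤ m
abbrev NP2V (k j m : ℕ) : XX → Prop := fun x => ¬ (x.1 ≤ (k:ℤ) * x.2 + 2*(j:ℤ)) ∧ x.2 ≤ m

def GapV (k j : ℕ) : Submodule ℂ L := sup (GapP k j)

def pg (k j : ℕ) : L →ₗ[ℂ] GapV k j :=
  LinearMap.codRestrict (GapV k j) (fil (GapP k j)) (fun f => fil_mem_sup _ f)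

lemma pg_coe (k j : ℕ) (f : L) : (pg k j f : L) = fil (GapP k j) f := rfl

lemma pg_eq_zero_iff {k j : ℕ} {f : L} : pg k j f = 0 ↔ fil (GapP k j) f = 0 := by
  constructor
  · intro h; have := congrArg (Subtype.val) h; simpa [pg_coe] using this
  · intro h; apply Subtype.ext; simpa [pg_coe] using h

def mulL (g : L) : L →ₗ[ℂ] L := LinearMap.mulLeft ℂ g

lemma mulL_apply (g f : L) : mulL g f = g * f := rfl

def phiV (k j : ℕ) (p : L) : L →ₗ[ℂ] GapV k j := (pg k j).comp (mulL (zp (-(j:ℤ)) * p))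

def prA : T4 →ₗ[ℂ] L := LinearMap.fst ℂ L (L × L × L)
def prB : T4 →ₗ[ℂ] L :=
  (LinearMap.fst ℂ L (L × L)).comp (LinearMap.snd ℂ L (L × L × L))
def prC : T4 →ₗ[ℂ] L :=
  (LinearMap.fst ℂ L L).comp
    ((LinearMap.snd ℂ L (L × L)).comp (LinearMap.snd ℂ L (L × L × L)))
def prD : T4 →ₗ[ℂ] L :=
  (LinearMap.snd ℂ L L).comp
    ((LinearMap.snd ℂ L (L × L)).comp (LinearMap.snd ℂ L (L × L × L)))

@[simp] lemma prA_apply (σ : T4) : prA σ = σ.1 := rfl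
@[simp] lemma prB_apply (σ : T4) : prB σ = σ.2.1 := rfl
@[simp] lemma prC_apply (σ : T4) : prC σ = σ.2.2.1 := rfl
@[simp] lemma prD_apply (σ : T4) : prD σ = σ.2.2.2 := rfl

def C1 (k j m : ℕ) (p : L) : T4 →ₗ[ℂ] L :=
  (fil (NPV k m)).comp
    (prA + (mulL (zp (j:ℤ) * p)).comp prB + (mulL (zp (-(j:ℤ)) * p)).comp prC
      + (mulL (p * p)).comp prD)
def C2 (k j m : ℕ) (p : L) : T4 →ₗ[ℂ] L :=
  (fil (NPb k j m)).comp (prB + (mulL (zp (-(j:ℤ)) * p)).comp prD)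
def C3 (k j m : ℕ) (p : L) : T4 →ₗ[ℂ] L :=
  (fil (NP2V k j m)).comp (prC + (mulL (zp (j:ℤ) * p)).comp prD)
def C4 (k m : ℕ) : T4 →ₗ[ℂ] L := (fil (NPV k m)).comp prD

lemma C1_apply (k j m : ℕ) (p : L) (σ : T4) :
    C1 k j m p σ = fil (NPV k m)
      (σ.1 + zp (j:ℤ) * p * σ.2.1 + zp (-(j:ℤ)) * p * σ.2.2.1 + p * p * σ.2.2.2) := by
  simp [C1, mulL_apply, mul_assoc]
lemma C2_apply (k j m : ℕ) (p : L) (σ : T4) :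
    C2 k j m p σ = fil (NPb k j m) (σ.2.1 + zp (-(j:ℤ)) * p * σ.2.2.2) := by
  simp [C2, mulL_apply, mul_assoc]
lemma C3_apply (k j m : ℕ) (p : L) (σ : T4) :
    C3 k j m p σ = fil (NP2V k j m) (σ.2.2.1 + zp (j:ℤ) * p * σ.2.2.2) := by
  simp [C3, mulL_apply, mul_assoc]
lemma C4_apply (k m : ℕ) (σ : T4) : C4 k m σ = fil (NPV k m) σ.2.2.2 := rfl

def mkL (m : ℕ) : L →ₗ[ℂ] Lm m := (Ideal.Quotient.mkₐ ℂ _).toLinearMap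

lemma mkL_apply (m : ℕ) (f : L) : mkL m f = mkm m f := rfl

def mk4 (m : ℕ) : T4 →ₗ[ℂ] Q4 m :=
  (mkL m).prodMap ((mkL m).prodMap ((mkL m).prodMap (mkL m)))

lemma mk4_apply (m : ℕ) (σ : T4) :
    mk4 m σ = (mkm m σ.1, mkm m σ.2.1, mkm m σ.2.2.1, mkm m σ.2.2.2) := rfl

def X0 (k m : ℕ) : Submodule ℂ L :=
  sup (fun x => 0 ≤ x.1 ∧ x.1 ≤ (k:ℤ) * x.2 ∧ x.2 ≤ m)
def X2b (k j m : ℕ) : Submodule ℂ L :=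
  sup (fun x => 0 ≤ x.1 ∧ x.1 + 2*(j:ℤ) ≤ (k:ℤ) * x.2 ∧ x.2 ≤ m)
def X2c (k j m : ℕ) : Submodule ℂ L :=
  sup (fun x => 0 ≤ x.1 ∧ x.1 ≤ (k:ℤ) * x.2 + 2*(j:ℤ) ∧ x.2 ≤ m)
def supAm (m : ℕ) : Submodule ℂ L := sup (fun x => 0 ≤ x.1 ∧ x.2 ≤ m)
def X0low (k j : ℕ) : Submodule ℂ L :=
  sup (fun x => 0 ≤ x.1 ∧ x.1 ≤ (k:ℤ) * x.2 ∧ x.2 < 2*j)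

def Rst (k j : ℕ) (p : L) : Submodule ℂ (GapV k j) :=
  Submodule.map (phiV k j p) (X0low k j)

def Kp (k j m : ℕ) (p : L) : Submodule ℂ L := X0 k m ⊓ LinearMap.ker (phiV k j p)

def muT (k j : ℕ) (p : L) : T4 →ₗ[ℂ] GapV k j :=
  (pg k j).comp prB + (phiV k j p).comp ((fil nPA).comp prD)

lemma muT_apply (k j : ℕ) (p : L) (σ : T4) :
    muT k j p σ = pg k j σ.2.1 + phiV k j p (fil nPA σ.2.2.2) := rfl

def KK (k j : ℕ) (p : L) : Submodule ℂ T4 := Submodule.comap (muT k j p) (Rst k j p)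

def NN0 (k j m : ℕ) (p : L) : Submodule ℂ T4 :=
  Submodule.comap prA (supAm m) ⊓ Submodule.comap prB (supAm m) ⊓
  Submodule.comap prC (supAm m) ⊓ Submodule.comap prD (supAm m) ⊓
  LinearMap.ker (C1 k j m p) ⊓ LinearMap.ker (C2 k j m p) ⊓
  LinearMap.ker (C3 k j m p) ⊓ LinearMap.ker (C4 k m)

lemma mem_NN0_iff {k j m : ℕ} {p : L} {σ : T4} :
    σ ∈ NN0 k j m p ↔
      σ.1 ∈ supAm m ∧ σ.2.1 ∈ supAm m ∧ σ.2.2.1 ∈ supAm m ∧ σ.2.2.2 ∈ supAm m ∧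
      C1 k j m p σ = 0 ∧ C2 k j m p σ = 0 ∧ C3 k j m p σ = 0 ∧ C4 k m σ = 0 := by
  simp [NN0, Submodule.mem_inf, LinearMap.mem_ker]
  tauto

def D4 (k j m : ℕ) (p : L) : Submodule ℂ T4 :=
  (X0 k m).prod ((X2b k j m).prod ((X2c k j m).prod (Kp k j m p)))

lemma mem_D4_iff {k j m : ℕ} {p : L} {σ : T4} :
    σ ∈ D4 k j m p ↔
      σ.1 ∈ X0 k m ∧ σ.2.1 ∈ X2b k j m ∧ σ.2.2.1 ∈ X2c k j m ∧ σ.2.2.2 ∈ Kp k j m p := by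
  simp [D4, Submodule.mem_prod]
-- ### bridging lemmas
lemma fil_congr {P Q : XX → Prop} (h : ∀ x, P x ↔ Q x) (f : L) : fil P f = fil Q f := by
  ext x
  by_cases hx : P x
  · rw [fil_apply_pos _ hx, fil_apply_pos _ ((h x).1 hx)]
  · rw [fil_apply_neg _ hx, fil_apply_neg _ (fun hq => hx ((h x).2 hq))]

lemma fil_split (P Q : XX → Prop) (f : L) :
    fil P f = fil (fun x => P x ∧ Q x) f + fil (fun x => P x ∧ ¬ Q x) f := by
  ext x
  rw [AddMonoidAlgebra.coeff_add, Finsupp.add_apply]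
  by_cases hP : P x <;> by_cases hQ : Q x
  · rw [fil_apply_pos _ hP, fil_apply_pos _ ⟨hP, hQ⟩,
      fil_apply_neg (x := x) _ (by tauto), add_zero]
  · rw [fil_apply_pos _ hP, fil_apply_neg (x := x) _ (by tauto),
      fil_apply_pos _ ⟨hP, hQ⟩, zero_add]
  · rw [fil_apply_neg _ hP, fil_apply_neg (x := x) _ (by tauto),
      fil_apply_neg (x := x) _ (by tauto), add_zero]
  · rw [fil_apply_neg _ hP, fil_apply_neg (x := x) _ (by tauto),
      fil_apply_neg (x := x) _ (by tauto), add_zero]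

lemma vhol_iff_sup {k : ℕ} {f : L} : VHol k f ↔ f ∈ sup (fun x => x.1 ≤ (k:ℤ) * x.2) := by
  rw [mem_sup_iff]
  constructor
  · intro h x hx
    by_contra hne
    exact hx (h x.1 x.2 hne)
  · intro h s r hne
    by_contra hs
    exact hne (h (s, r) hs)

lemma gap_r_lt {k j : ℕ} (hk : 1 ≤ k) {x : XX} (hx : GapP k j x) : x.2 < 2*j := by
  obtain ⟨h1, h2⟩ := hx
  have hr : (x.2 : ℤ) ≤ (k:ℤ) * x.2 := by
    have : (1:ℤ) ≤ (k:ℤ) := by exact_mod_cast hk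
    nlinarith [Int.ofNat_nonneg x.2]
  omega

lemma zp2j_q (j : ℕ) (p : L) :
    zp (2*(j:ℤ)) * (zp (-(j:ℤ)) * p) = zp (j:ℤ) * p := by
  rw [← mul_assoc, zp_mul_zp]
  have : 2*(j:ℤ) + -(j:ℤ) = (j:ℤ) := by ring
  rw [this]

lemma zpm2j_zpj (j : ℕ) (p : L) :
    zp (-(2*(j:ℤ))) * (zp (j:ℤ) * p) = zp (-(j:ℤ)) * p := by
  rw [← mul_assoc, zp_mul_zp]
  have : -(2*(j:ℤ)) + (j:ℤ) = -(j:ℤ) := by ring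
  rw [this]

-- translation of the W_m conditions
lemma mem_Wm_iff {k j m : ℕ} {p : L} (σ : T4) :
    mk4 m σ ∈ Wm k j m p ↔
      C1 k j m p σ = 0 ∧ C2 k j m p σ = 0 ∧ C3 k j m p σ = 0 ∧ C4 k m σ = 0 := by
  have e1 : (mk4 m σ).1 + mkm m (zp (j:ℤ) * p) * (mk4 m σ).2.1
      + mkm m (zp (-(j:ℤ)) * p) * (mk4 m σ).2.2.1 + mkm m (p * p) * (mk4 m σ).2.2.2
      = mkm m (σ.1 + zp (j:ℤ) * p * σ.2.1 + zp (-(j:ℤ)) * p * σ.2.2.1 + p * p * σ.2.2.2) := by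
    rw [mk4_apply]
    simp only [map_add, map_mul]
  have e2 : mkm m (zp (2 * (j:ℤ))) * (mk4 m σ).2.1 + mkm m (zp (j:ℤ) * p) * (mk4 m σ).2.2.2
      = mkm m (zp (2*(j:ℤ)) * (σ.2.1 + zp (-(j:ℤ)) * p * σ.2.2.2)) := by
    rw [mk4_apply]
    show mkm m (zp (2 * (j:ℤ))) * mkm m σ.2.1 + mkm m (zp (j:ℤ) * p) * mkm m σ.2.2.2 = _
    rw [← map_mul, ← map_mul, ← map_add]
    exact congrArg (mkm m) (by rw [mul_add, ← mul_assoc, zp2j_q])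
  have e3 : mkm m (zp (-(2 * (j:ℤ)))) * (mk4 m σ).2.2.1
        + mkm m (zp (-(j:ℤ)) * p) * (mk4 m σ).2.2.2
      = mkm m (zp (-(2*(j:ℤ))) * (σ.2.2.1 + zp (j:ℤ) * p * σ.2.2.2)) := by
    rw [mk4_apply]
    show mkm m (zp (-(2 * (j:ℤ)))) * mkm m σ.2.2.1 + mkm m (zp (-(j:ℤ)) * p) * mkm m σ.2.2.2 = _
    rw [← map_mul, ← map_mul, ← map_add]
    exact congrArg (mkm m) (by rw [mul_add, ← mul_assoc, zpm2j_zpj])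
  have e4 : (mk4 m σ).2.2.2 = mkm m σ.2.2.2 := rfl
  rw [Wm, Set.mem_setOf_eq, e1, e2, e3, e4]
  rw [VHolm_mk_iff, VHolm_mk_iff, VHolm_mk_iff, VHolm_mk_iff]
  rw [fil_zp_mul_eq_zero_iff, fil_zp_mul_eq_zero_iff]
  rw [C1_apply, C2_apply, C3_apply, C4_apply]
  have hcongr : fil (NP2V k j m) (σ.2.2.1 + zp (j:ℤ) * p * σ.2.2.2)
      = fil (fun x : XX => ¬ x.1 + -(2*(j:ℤ)) ≤ (k:ℤ)*x.2 ∧ x.2 ≤ m)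
          (σ.2.2.1 + zp (j:ℤ) * p * σ.2.2.2) :=
    fil_congr (fun x => by constructor <;> (intro h; exact ⟨by omega, h.2⟩)) _
  constructor
  · rintro ⟨h1, h2, h3, h4⟩
    refine ⟨h1, h2, ?_, h4⟩
    rw [hcongr]
    exact (show (fil (fun x : XX => ¬ x.1 + -(2*(j:ℤ)) ≤ (k:ℤ)*x.2 ∧ x.2 ≤ m))
      (σ.2.2.1 + zp (j:ℤ) * p * σ.2.2.2) = 0 from h3)
  · rintro ⟨h1, h2, h3, h4⟩
    refine ⟨h1, h2, ?_, h4⟩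
    show (fil (fun x : XX => ¬ x.1 + -(2*(j:ℤ)) ≤ (k:ℤ)*x.2 ∧ x.2 ≤ m))
      (σ.2.2.1 + zp (j:ℤ) * p * σ.2.2.2) = 0
    rw [← hcongr]
    exact h3

lemma mem_Am_iff {m : ℕ} {y : Lm m} : y ∈ Am m ↔ ∃ g ∈ sup (fun x => 0 ≤ x.1), mkm m g = y := by
  constructor
  · rintro ⟨g, hg, rfl⟩
    exact ⟨g, (memPolyRing_iff g).1 hg, rfl⟩
  · rintro ⟨g, hg, rfl⟩
    exact ⟨g, (memPolyRing_iff g).2 hg, rfl⟩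
-- ### H0: the set A_m⁴ ∩ W_m(p) is the image of NN0
lemma supAm_le_PA (m : ℕ) : supAm m ≤ sup (fun x => 0 ≤ x.1) :=
  sup_mono (fun x hx => hx.1)

lemma H0_set_eq (k j m : ℕ) (p : L) :
    (Am4 m ∩ Wm k j m p : Set (Q4 m)) = (mk4 m) '' (NN0 k j m p : Set T4) := by
  ext x
  constructor
  · rintro ⟨hA, hW⟩
    obtain ⟨hA1, hA2, hA3, hA4⟩ := hA
    obtain ⟨g1, hg1, he1⟩ := mem_Am_iff.1 hA1
    obtain ⟨g2, hg2, he2⟩ := mem_Am_iff.1 hA2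
    obtain ⟨g3, hg3, he3⟩ := mem_Am_iff.1 hA3
    obtain ⟨g4, hg4, he4⟩ := mem_Am_iff.1 hA4
    set σ : T4 := (fil (fun y => y.2 ≤ m) g1, fil (fun y => y.2 ≤ m) g2,
      fil (fun y => y.2 ≤ m) g3, fil (fun y => y.2 ≤ m) g4) with hσ
    have hmk : ∀ g : L, mkm m (fil (fun y => y.2 ≤ m) g) = mkm m g := by
      intro g
      rw [mk_eq_mk_iff]
      intro y hy
      exact fil_apply_pos _ hy
    have hx4 : mk4 m σ = x := by
      rw [mk4_apply, hσ]
      simp only [hmk, he1, he2, he3, he4]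
    refine ⟨σ, ?_, hx4⟩
    rw [SetLike.mem_coe, mem_NN0_iff]
    have hsup : ∀ g : L, g ∈ sup (fun x => 0 ≤ x.1) →
        fil (fun y => y.2 ≤ m) g ∈ supAm m := by
      intro g hg
      exact fil_mem_sup' _ _ hg (fun y h1 h2 => ⟨h2, h1⟩)
    have hWσ := (mem_Wm_iff (k := k) (j := j) (m := m) (p := p) σ).1 (by rwa [hx4])
    exact ⟨hsup g1 hg1, hsup g2 hg2, hsup g3 hg3, hsup g4 hg4,
      hWσ.1, hWσ.2.1, hWσ.2.2.1, hWσ.2.2.2⟩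
  · rintro ⟨σ, hσ, rfl⟩
    rw [SetLike.mem_coe, mem_NN0_iff] at hσ
    constructor
    · refine ⟨?_, ?_, ?_, ?_⟩ <;>
        exact mem_Am_iff.2 ⟨_, supAm_le_PA m (by tauto), rfl⟩
    · exact (mem_Wm_iff σ).2 ⟨hσ.2.2.2.2.1, hσ.2.2.2.2.2.1, hσ.2.2.2.2.2.2.1, hσ.2.2.2.2.2.2.2⟩

lemma H0m_eq_map (k j m : ℕ) (p : L) :
    H0m k j m p = Submodule.map (mk4 m) (NN0 k j m p) := by
  rw [H0m, H0_set_eq, ← Submodule.map_coe]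
  exact Submodule.span_eq _
-- ### the linear equivalence NN0 ≃ D4
abbrev PVp (k : ℕ) : XX → Prop := fun x => x.1 ≤ (k:ℤ)*x.2
abbrev Pbp (k j : ℕ) : XX → Prop := fun x => x.1 + 2*(j:ℤ) ≤ (k:ℤ)*x.2
abbrev P2Vp (k j : ℕ) : XX → Prop := fun x => x.1 ≤ (k:ℤ)*x.2 + 2*(j:ℤ)

def Glin (k j : ℕ) : T4 →ₗ[ℂ] T4 :=
  (fil (PVp k)).prodMap ((fil (Pbp k j)).prodMap ((fil (P2Vp k j)).prodMap LinearMap.id))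

lemma Glin_apply (k j : ℕ) (σ : T4) :
    Glin k j σ = (fil (PVp k) σ.1, fil (Pbp k j) σ.2.1, fil (P2Vp k j) σ.2.2.1, σ.2.2.2) := rfl

lemma fil_incompat {P Q : XX → Prop} (h : ∀ x, P x → Q x → False) (f : L) :
    fil P (fil Q f) = 0 := by
  rw [fil_fil]
  exact fil_eq_zero_iff.2 (fun x hx => (h x hx.1 hx.2).elim)

lemma fil_idem (P : XX → Prop) (f : L) : fil P (fil P f) = fil P f := by
  rw [fil_fil]
  exact fil_congr (fun x => ⟨fun h => h.1, fun h => ⟨h, h⟩⟩) f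

lemma eq_zero_of_two_fils {m : ℕ} {y : L} (hy : y ∈ supAm m) {Q : XX → Prop}
    (h1 : fil Q y = 0) (h2 : fil (fun x => ¬ Q x ∧ x.2 ≤ m) y = 0) : y = 0 := by
  rw [supAm] at hy
  ext x
  by_cases hA : 0 ≤ x.1 ∧ x.2 ≤ m
  · by_cases hQ : Q x
    · exact fil_eq_zero_iff.1 h1 x hQ
    · exact fil_eq_zero_iff.1 h2 x ⟨hQ, hA.2⟩
  · exact mem_sup_iff.1 hy x hA

lemma d_mem_X0 {k m : ℕ} {d : L} (hd : d ∈ supAm m) (h4 : fil (NPV k m) d = 0) :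
    d ∈ X0 k m := by
  rw [supAm] at hd
  rw [X0]
  rw [mem_sup_iff] at hd ⊢
  intro x hx
  by_cases hA : 0 ≤ x.1 ∧ x.2 ≤ m
  · exact fil_eq_zero_iff.1 h4 x ⟨fun hPV => hx ⟨hA.1, hPV, hA.2⟩, hA.2⟩
  · exact hd x hA

lemma gap_subset_NPb {k j m : ℕ} (hk : 1 ≤ k) (hm : 2*j ≤ m) :
    ∀ x, GapP k j x → NPb k j m x := by
  intro x hx
  have := gap_r_lt hk hx
  exact ⟨hx.2, by omega⟩

lemma fil_gap_of_NPb {k j m : ℕ} (hk : 1 ≤ k) (hm : 2*j ≤ m) {y : L}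
    (h : fil (NPb k j m) y = 0) : fil (GapP k j) y = 0 := by
  have h1 : fil (GapP k j) y = fil (GapP k j) (fil (NPb k j m) y) := by
    rw [fil_fil]
    exact fil_congr (fun x => ⟨fun hx => ⟨hx, gap_subset_NPb hk hm x hx⟩, fun hx => hx.1⟩) y
  rw [h1, h, map_zero]

lemma phiV_eq_zero_of_C2 {k j m : ℕ} {p b d : L} (hk : 1 ≤ k) (hm : 2*j ≤ m)
    (hb : b ∈ supAm m) (h2 : fil (NPb k j m) (b + zp (-(j:ℤ))*p*d) = 0) :
    phiV k j p d = 0 := by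
  rw [phiV, LinearMap.comp_apply, pg_eq_zero_iff, mulL_apply]
  have := fil_gap_of_NPb hk hm h2
  rw [map_add] at this
  have hb0 : fil (GapP k j) b = 0 :=
    fil_eq_zero_of_sup hb (fun x hx hgap => hgap.1 hx.1)
  rw [hb0, zero_add] at this
  exact this

-- the NPb-filter of q*d is PA-supported when phiV d = 0
lemma fil_NPb_mem_supAm {k j m : ℕ} {p d : L} (hphi : phiV k j p d = 0) :
    fil (NPb k j m) (zp (-(j:ℤ))*p*d) ∈ supAm m := by
  have hgap : fil (GapP k j) (zp (-(j:ℤ))*p*d) = 0 := by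
    rw [phiV, LinearMap.comp_apply, pg_eq_zero_iff, mulL_apply] at hphi
    exact hphi
  have hsplit := fil_split (NPb k j m) (fun x => 0 ≤ x.1) (zp (-(j:ℤ))*p*d)
  have h2 : fil (fun x => NPb k j m x ∧ ¬ 0 ≤ x.1) (zp (-(j:ℤ))*p*d) = 0 := by
    have : fil (fun x => NPb k j m x ∧ ¬ 0 ≤ x.1) (zp (-(j:ℤ))*p*d)
        = fil (fun x => x.2 ≤ m) (fil (GapP k j) (zp (-(j:ℤ))*p*d)) := by
      rw [fil_fil]
      exact fil_congr (fun x => by tauto) _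
    rw [this, hgap, map_zero]
  rw [hsplit, h2, add_zero]
  exact fil_mem_sup' _ _ (true_mem_sup _) (fun x hx _ => ⟨hx.2, hx.1.2⟩)

lemma fil_NPV_mem_supAm {k m : ℕ} (w : L) : fil (NPV k m) w ∈ supAm m := by
  refine fil_mem_sup' _ _ (true_mem_sup w) (fun x hx _ => ⟨?_, hx.2⟩)
  have h0 : (0:ℤ) ≤ (k:ℤ)*x.2 := by positivity
  omega

lemma fil_NP2V_mem_supAm {k j m : ℕ} (w : L) : fil (NP2V k j m) w ∈ supAm m := by
  refine fil_mem_sup' _ _ (true_mem_sup w) (fun x hx _ => ⟨?_, hx.2⟩)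
  have h0 : (0:ℤ) ≤ (k:ℤ)*x.2 := by positivity
  omega

lemma Glin_mapsTo {k j m : ℕ} {p : L} (hk : 1 ≤ k) (hm : 2*j ≤ m) :
    ∀ σ ∈ NN0 k j m p, Glin k j σ ∈ D4 k j m p := by
  intro σ hσ
  rw [mem_NN0_iff] at hσ
  obtain ⟨ha, hb, hc, hd, h1, h2, h3, h4⟩ := hσ
  rw [C1_apply] at h1; rw [C2_apply] at h2; rw [C3_apply] at h3; rw [C4_apply] at h4
  rw [Glin_apply, mem_D4_iff]
  refine ⟨?_, ?_, ?_, ?_⟩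
  · exact fil_mem_sup' _ _ ha (fun x hP hQ => ⟨hQ.1, hP, hQ.2⟩)
  · exact fil_mem_sup' _ _ hb (fun x hP hQ => ⟨hQ.1, hP, hQ.2⟩)
  · exact fil_mem_sup' _ _ hc (fun x hP hQ => ⟨hQ.1, hP, hQ.2⟩)
  · rw [Kp, Submodule.mem_inf]
    exact ⟨d_mem_X0 hd h4, LinearMap.mem_ker.2 (phiV_eq_zero_of_C2 hk hm hb h2)⟩

lemma Glin_injOn {k j m : ℕ} {p : L} (σ : T4) (hσ : σ ∈ NN0 k j m p)
    (h : Glin k j σ = 0) : σ = 0 := by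
  rw [mem_NN0_iff] at hσ
  obtain ⟨ha, hb, hc, hd, h1, h2, h3, h4⟩ := hσ
  rw [C1_apply] at h1; rw [C2_apply] at h2; rw [C3_apply] at h3; rw [C4_apply] at h4
  rw [Glin_apply, Prod.ext_iff, Prod.ext_iff, Prod.ext_iff] at h
  obtain ⟨ga, gb, gc, gd⟩ := h
  simp only at ga gb gc gd
  have hd0 : σ.2.2.2 = 0 := gd
  rw [hd0, mul_zero, add_zero] at h2 h3
  have hc0 : σ.2.2.1 = 0 := eq_zero_of_two_fils hc gc h3
  have hb0 : σ.2.1 = 0 := eq_zero_of_two_fils hb gb h2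
  rw [hd0, hc0, hb0, mul_zero, mul_zero, mul_zero, add_zero, add_zero, add_zero] at h1
  have ha0 : σ.1 = 0 := eq_zero_of_two_fils ha ga h1
  exact Prod.ext ha0 (Prod.ext hb0 (Prod.ext hc0 hd0))

lemma Glin_surjOn {k j m : ℕ} {p : L} (y : T4) (hy : y ∈ D4 k j m p) :
    ∃ σ ∈ NN0 k j m p, Glin k j σ = y := by
  rw [mem_D4_iff] at hy
  obtain ⟨hya, hyb, hyc, hyd⟩ := hy
  rw [Kp, Submodule.mem_inf, LinearMap.mem_ker] at hyd
  obtain ⟨hydX, hydK⟩ := hyd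
  set d : L := y.2.2.2 with hdd
  set c : L := y.2.2.1 - fil (NP2V k j m) (zp (j:ℤ)*p*d) with hcc
  set b : L := y.2.1 - fil (NPb k j m) (zp (-(j:ℤ))*p*d) with hbb
  set a : L := y.1 - fil (NPV k m) (zp (j:ℤ)*p*b + zp (-(j:ℤ))*p*c + p*p*d) with haa
  have hX0supAm : X0 k m ≤ supAm m := sup_mono (fun x hx => ⟨hx.1, hx.2.2⟩)
  have hX2bsupAm : X2b k j m ≤ supAm m := sup_mono (fun x hx => ⟨hx.1, hx.2.2⟩)
  have hX2csupAm : X2c k j m ≤ supAm m := sup_mono (fun x hx => ⟨hx.1, hx.2.2⟩)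
  have hdm : d ∈ supAm m := hX0supAm hydX
  have hcm : c ∈ supAm m := sub_mem (hX2csupAm hyc) (fil_NP2V_mem_supAm _)
  have hbm : b ∈ supAm m := sub_mem (hX2bsupAm hyb) (fil_NPb_mem_supAm hydK)
  have ham : a ∈ supAm m := sub_mem (hX0supAm hya) (fil_NPV_mem_supAm _)
  -- conditions
  have h4 : fil (NPV k m) d = 0 :=
    fil_eq_zero_of_sup hydX (fun x hx hN => hN.1 hx.2.1)
  have h2 : fil (NPb k j m) (b + zp (-(j:ℤ))*p*d) = 0 := by
    rw [hbb, map_add, map_sub, fil_idem]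
    have hz : fil (NPb k j m) y.2.1 = 0 :=
      fil_eq_zero_of_sup hyb (fun x hx hN => hN.1 hx.2.1)
    rw [hz]
    ring
  have h3 : fil (NP2V k j m) (c + zp (j:ℤ)*p*d) = 0 := by
    rw [hcc, map_add, map_sub, fil_idem]
    have hz : fil (NP2V k j m) y.2.2.1 = 0 :=
      fil_eq_zero_of_sup hyc (fun x hx hN => hN.1 hx.2.1)
    rw [hz]
    ring
  have h1 : fil (NPV k m) (a + zp (j:ℤ)*p*b + zp (-(j:ℤ))*p*c + p*p*d) = 0 := by
    have harg : a + zp (j:ℤ)*p*b + zp (-(j:ℤ))*p*c + p*p*d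
        = y.1 - fil (NPV k m) (zp (j:ℤ)*p*b + zp (-(j:ℤ))*p*c + p*p*d)
          + (zp (j:ℤ)*p*b + zp (-(j:ℤ))*p*c + p*p*d) := by
      rw [haa]; ring
    rw [harg, map_add, map_sub, fil_idem]
    have hz : fil (NPV k m) y.1 = 0 :=
      fil_eq_zero_of_sup hya (fun x hx hN => hN.1 hx.2.1)
    rw [hz]
    ring
  refine ⟨(a, b, c, d), ?_, ?_⟩
  · rw [mem_NN0_iff]
    refine ⟨ham, hbm, hcm, hdm, ?_, ?_, ?_, ?_⟩
    · rw [C1_apply]; exact h1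
    · rw [C2_apply]; exact h2
    · rw [C3_apply]; exact h3
    · rw [C4_apply]; exact h4
  · rw [Glin_apply]
    have e1 : fil (PVp k) a = y.1 := by
      rw [haa, map_sub, fil_incompat (fun x hP hN => hN.1 hP) _, sub_zero]
      exact fil_of_mem_sup (sup_mono (fun x hx => hx.2.1) hya)
    have e2 : fil (Pbp k j) b = y.2.1 := by
      rw [hbb, map_sub, fil_incompat (fun x hP hN => hN.1 hP) _, sub_zero]
      exact fil_of_mem_sup (sup_mono (fun x hx => hx.2.1) hyb)
    have e3 : fil (P2Vp k j) c = y.2.2.1 := by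
      rw [hcc, map_sub, fil_incompat (fun x hP hN => hN.1 hP) _, sub_zero]
      exact fil_of_mem_sup (sup_mono (fun x hx => hx.2.1) hyc)
    rw [e1, e2, e3]

lemma nn0_equiv_d4 {k j m : ℕ} {p : L} (hk : 1 ≤ k) (hm : 2*j ≤ m) :
    Nonempty ((NN0 k j m p) ≃ₗ[ℂ] (D4 k j m p)) := by
  refine ⟨LinearEquiv.ofBijective
    ((Glin k j).restrict (p := NN0 k j m p) (q := D4 k j m p) (Glin_mapsTo hk hm))
    ⟨?_, ?_⟩⟩
  · rw [← LinearMap.ker_eq_bot, Submodule.eq_bot_iff]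
    rintro ⟨x, hx⟩ hker
    rw [LinearMap.mem_ker] at hker
    have : Glin k j x = 0 := congrArg Subtype.val hker
    exact Subtype.ext (Glin_injOn x hx this)
  · rintro ⟨y, hy⟩
    obtain ⟨σ, hσ, hG⟩ := Glin_surjOn y hy
    exact ⟨⟨σ, hσ⟩, Subtype.ext hG⟩
-- ### finiteness and dimension formulas
lemma findim_sup {P : XX → Prop} (h : {x : XX | P x}.Finite) :
    FiniteDimensional ℂ (sup P) := by
  haveI := h.fintype
  have e1 := Finsupp.supportedEquivFinsupp (M := ℂ) (R := ℂ) {x : XX | P x}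
  have e2 := Finsupp.linearEquivFunOnFinite ℂ ℂ {x : XX | P x}
  haveI : FiniteDimensional ℂ (Finsupp.supported ℂ ℂ {x : XX | P x}) :=
    Module.Finite.equiv (e1.trans e2).symm
  exact Module.Finite.of_injective (((AddMonoidAlgebra.coeffLinearEquiv ℂ).toLinearMap).restrict
    (p := sup P) (q := Finsupp.supported ℂ ℂ {x : XX | P x}) (fun x hx => hx))
    (fun a b hab => Subtype.ext (AddMonoidAlgebra.coeff_injective (congrArg Subtype.val hab)))

lemma set_finite_of_bounds {P : XX → Prop} (lo hi : ℤ) (n : ℕ)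
    (h : ∀ x, P x → lo ≤ x.1 ∧ x.1 ≤ hi ∧ x.2 ≤ n) : {x : XX | P x}.Finite := by
  refine Set.Finite.subset ((Set.finite_Icc lo hi).prod (Set.finite_Iic n)) ?_
  rintro x hx
  obtain ⟨h1, h2, h3⟩ := h x hx
  exact ⟨⟨h1, h2⟩, h3⟩

lemma kcast_le {k a m : ℕ} (h : a ≤ m) : (k:ℤ) * a ≤ (k:ℤ) * m :=
  mul_le_mul_of_nonneg_left (by exact_mod_cast h) (by positivity)

instance X0_findim (k m : ℕ) : FiniteDimensional ℂ (X0 k m) := by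
  rw [X0]
  refine findim_sup (set_finite_of_bounds 0 ((k:ℤ)*m) m (fun x hx => ⟨hx.1, ?_, hx.2.2⟩))
  exact le_trans hx.2.1 (kcast_le hx.2.2)

instance X2b_findim (k j m : ℕ) : FiniteDimensional ℂ (X2b k j m) := by
  have hle : X2b k j m ≤ X0 k m := by
    rw [X2b, X0]
    refine sup_mono (fun x hx => ⟨hx.1, ?_, hx.2.2⟩)
    have : (0:ℤ) ≤ 2*(j:ℤ) := by positivity
    omega
  exact Submodule.finiteDimensional_of_le hle

instance X2c_findim (k j m : ℕ) : FiniteDimensional ℂ (X2c k j m) := by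
  rw [X2c]
  refine findim_sup (set_finite_of_bounds 0 ((k:ℤ)*m + 2*(j:ℤ)) m (fun x hx => ⟨hx.1, ?_, hx.2.2⟩))
  have := kcast_le (k := k) hx.2.2
  omega

instance Kp_findim (k j m : ℕ) (p : L) : FiniteDimensional ℂ (Kp k j m p) :=
  Submodule.finiteDimensional_of_le inf_le_left

instance X0low_findim (k j : ℕ) : FiniteDimensional ℂ (X0low k j) := by
  rw [X0low]
  refine findim_sup (set_finite_of_bounds 0 ((k * (2*j) : ℕ) : ℤ) (2*j)
    (fun x hx => ⟨hx.1, ?_, by exact_mod_cast le_of_lt hx.2.2⟩))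
  have h2 : (k:ℤ) * x.2 ≤ ((k * (2*j) : ℕ) : ℤ) := by
    exact_mod_cast Nat.mul_le_mul_left k (le_of_lt hx.2.2)
  exact le_trans hx.2.1 h2

lemma GapV_findim {k j : ℕ} (hk : 1 ≤ k) : FiniteDimensional ℂ (GapV k j) := by
  rw [GapV]
  refine findim_sup (set_finite_of_bounds (-(2*(j:ℤ))) 0 (2*j) (fun x hx => ?_))
  have hr := gap_r_lt hk hx
  have h0 : (0:ℤ) ≤ (k:ℤ)*x.2 := by positivity
  obtain ⟨h1, h2⟩ := hx
  exact ⟨by omega, by omega, by omega⟩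

-- product of submodules
def prodSubEquiv {M N : Type*} [AddCommGroup M] [AddCommGroup N] [Module ℂ M] [Module ℂ N]
    (p : Submodule ℂ M) (q : Submodule ℂ N) : (p.prod q) ≃ₗ[ℂ] p × q where
  toFun x := (⟨x.1.1, x.2.1⟩, ⟨x.1.2, x.2.2⟩)
  map_add' _ _ := rfl
  map_smul' _ _ := rfl
  invFun y := ⟨(y.1.1, y.2.1), ⟨y.1.2, y.2.2⟩⟩
  left_inv _ := rfl
  right_inv _ := rfl

lemma findim_prodSub {M N : Type*} [AddCommGroup M] [AddCommGroup N] [Module ℂ M] [Module ℂ N]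
    (p : Submodule ℂ M) (q : Submodule ℂ N) [FiniteDimensional ℂ p] [FiniteDimensional ℂ q] :
    FiniteDimensional ℂ (p.prod q) :=
  Module.Finite.equiv (prodSubEquiv p q).symm

lemma finrank_prodSub {M N : Type*} [AddCommGroup M] [AddCommGroup N] [Module ℂ M] [Module ℂ N]
    (p : Submodule ℂ M) (q : Submodule ℂ N) [FiniteDimensional ℂ p] [FiniteDimensional ℂ q] :
    Module.finrank ℂ (p.prod q) = Module.finrank ℂ p + Module.finrank ℂ q := by
  rw [(prodSubEquiv p q).finrank_eq, Module.finrank_prod]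

instance D4_findim (k j m : ℕ) (p : L) : FiniteDimensional ℂ (D4 k j m p) := by
  rw [D4]
  haveI := findim_prodSub (X2c k j m) (Kp k j m p)
  haveI := findim_prodSub (X2b k j m) ((X2c k j m).prod (Kp k j m p))
  exact findim_prodSub _ _

lemma finrank_D4 (k j m : ℕ) (p : L) :
    Module.finrank ℂ (D4 k j m p) =
      Module.finrank ℂ (X0 k m) + Module.finrank ℂ (X2b k j m)
      + Module.finrank ℂ (X2c k j m) + Module.finrank ℂ (Kp k j m p) := by
  rw [D4]
  haveI := findim_prodSub (X2c k j m) (Kp k j m p)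
  haveI := findim_prodSub (X2b k j m) ((X2c k j m).prod (Kp k j m p))
  rw [finrank_prodSub, finrank_prodSub, finrank_prodSub]
  ring

-- rank-nullity for phiV on X0
lemma range_domRestrict' {M N : Type*} [AddCommGroup M] [AddCommGroup N] [Module ℂ M]
    [Module ℂ N] (f : M →ₗ[ℂ] N) (S : Submodule ℂ M) :
    LinearMap.range (f.domRestrict S) = Submodule.map f S := by
  ext y
  simp only [LinearMap.mem_range, Submodule.mem_map, LinearMap.domRestrict_apply]
  constructor
  · rintro ⟨⟨x, hx⟩, rfl⟩; exact ⟨x, hx, rfl⟩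
  · rintro ⟨x, hx, rfl⟩; exact ⟨⟨x, hx⟩, rfl⟩

lemma finrank_X0_split (k j m : ℕ) (p : L) :
    Module.finrank ℂ (X0 k m) =
      Module.finrank ℂ (Submodule.map (phiV k j p) (X0 k m)) + Module.finrank ℂ (Kp k j m p) := by
  have h := LinearMap.finrank_range_add_finrank_ker ((phiV k j p).domRestrict (X0 k m))
  rw [range_domRestrict'] at h
  have hker : Submodule.map (X0 k m).subtype
      (LinearMap.ker ((phiV k j p).domRestrict (X0 k m))) = Kp k j m p := by
    ext y
    simp only [Submodule.mem_map, LinearMap.mem_ker, LinearMap.domRestrict_apply, Kp,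
      Submodule.mem_inf, Submodule.coe_subtype]
    constructor
    · rintro ⟨⟨x, hx⟩, hk0, rfl⟩; exact ⟨hx, hk0⟩
    · rintro ⟨hy, hy0⟩; exact ⟨⟨y, hy⟩, hy0, rfl⟩
  rw [← h, ← hker, Submodule.finrank_map_subtype_eq]

-- stability of the image
lemma phiV_kills_high {k j : ℕ} (p : L) (hk : 1 ≤ k) {w : L}
    (hw : w ∈ sup (fun x => ¬ x.2 < 2*j)) : phiV k j p w = 0 := by
  rw [phiV, LinearMap.comp_apply, pg_eq_zero_iff, mulL_apply]
  refine fil_eq_zero_of_sup (mul_mem_sup_right _ hw (R := fun x => ¬ x.2 < 2*j)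
    (fun x y hy => by simp only [Prod.snd_add] at *; omega)) ?_
  intro x hx hgap
  exact hx (gap_r_lt hk hgap)

lemma map_phiV_X0_eq_Rst {k j m : ℕ} (p : L) (hk : 1 ≤ k) (hm : 2*j ≤ m) :
    Submodule.map (phiV k j p) (X0 k m) = Rst k j p := by
  apply le_antisymm
  · rintro y ⟨x, hx, rfl⟩
    have hdec := fil_add_fil_not (fun z : XX => z.2 < 2*j) x
    have hlow : fil (fun z : XX => z.2 < 2*j) x ∈ X0low k j := by
      rw [X0low]
      exact fil_mem_sup' _ _ (hx : x ∈ X0 k m) (fun z hP hQ => ⟨hQ.1, hQ.2.1, hP⟩)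
    have hhigh : phiV k j p (fil (fun z : XX => ¬ z.2 < 2*j) x) = 0 :=
      phiV_kills_high p hk (fil_mem_sup _ x)
    have : phiV k j p x = phiV k j p (fil (fun z : XX => z.2 < 2*j) x) := by
      conv_lhs => rw [← hdec]
      rw [map_add, hhigh, add_zero]
    rw [this]
    exact ⟨_, hlow, rfl⟩
  · rw [Rst]
    refine Submodule.map_mono ?_
    rw [X0low, X0]
    exact sup_mono (fun x hx => ⟨hx.1, hx.2.1, by omega⟩)
-- ### H1: span (Am4 ∪ Wm) = image of KK
abbrev PAp : XX → Prop := fun x => 0 ≤ x.1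
abbrev Pmp (m : ℕ) : XX → Prop := fun x => x.2 ≤ m

lemma mkm_fil (m : ℕ) (g : L) : mkm m (fil (Pmp m) g) = mkm m g := by
  rw [mk_eq_mk_iff]
  intro y hy
  exact fil_apply_pos _ hy

lemma phiV_kills_high_m {k j m : ℕ} (p : L) (hk : 1 ≤ k) (hm : 2*j ≤ m) {w : L}
    (hw : w ∈ sup (fun x => ¬ x.2 ≤ m)) : phiV k j p w = 0 := by
  rw [phiV, LinearMap.comp_apply, pg_eq_zero_iff, mulL_apply]
  refine fil_eq_zero_of_sup (mul_mem_sup_right _ hw (R := fun x => ¬ x.2 ≤ m)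
    (fun x y hy => by simp only [Prod.snd_add] at *; omega)) ?_
  intro x hx hgap
  have := gap_r_lt hk hgap
  omega

lemma mk4_surj (m : ℕ) : Function.Surjective (mk4 m) := by
  intro y
  obtain ⟨g1, h1⟩ := Ideal.Quotient.mk_surjective y.1
  obtain ⟨g2, h2⟩ := Ideal.Quotient.mk_surjective y.2.1
  obtain ⟨g3, h3⟩ := Ideal.Quotient.mk_surjective y.2.2.1
  obtain ⟨g4, h4⟩ := Ideal.Quotient.mk_surjective y.2.2.2
  exact ⟨(g1, g2, g3, g4), Prod.ext h1 (Prod.ext h2 (Prod.ext h3 h4))⟩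

lemma kx2_nonneg (k : ℕ) (x : XX) : (0:ℤ) ≤ (k:ℤ) * x.2 := by positivity

lemma Am4_mem_map {k j m : ℕ} {p : L} {x : Q4 m} (hx : x ∈ Am4 m) :
    x ∈ Submodule.map (mk4 m) (KK k j p) := by
  obtain ⟨hA1, hA2, hA3, hA4⟩ := hx
  obtain ⟨g1, hg1, he1⟩ := mem_Am_iff.1 hA1
  obtain ⟨g2, hg2, he2⟩ := mem_Am_iff.1 hA2
  obtain ⟨g3, hg3, he3⟩ := mem_Am_iff.1 hA3
  obtain ⟨g4, hg4, he4⟩ := mem_Am_iff.1 hA4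
  refine ⟨(g1, g2, g3, g4), ?_, by rw [mk4_apply]; rw [he1, he2, he3, he4]⟩
  rw [KK, SetLike.mem_coe, Submodule.mem_comap, muT_apply]
  have hb0 : pg k j g2 = 0 :=
    pg_eq_zero_iff.2 (fil_eq_zero_of_sup hg2 (fun z hz hgap => hgap.1 hz))
  have hd0 : fil nPA g4 = 0 := fil_eq_zero_of_sup hg4 (fun z hz hn => hn hz)
  rw [hb0, hd0, map_zero, add_zero]
  exact zero_mem _

lemma Wm_mem_map {k j m : ℕ} {p : L} (hk : 1 ≤ k) (hm : 2*j ≤ m) {x : Q4 m}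
    (hx : x ∈ Wm k j m p) : x ∈ Submodule.map (mk4 m) (KK k j p) := by
  obtain ⟨σ, rfl⟩ := mk4_surj m x
  obtain ⟨h1, h2, h3, h4⟩ := (mem_Wm_iff σ).1 hx
  rw [C2_apply] at h2
  rw [C4_apply] at h4
  refine ⟨σ, ?_, rfl⟩
  rw [KK, SetLike.mem_coe, Submodule.mem_comap, muT_apply]
  -- pg b = - phiV d
  have hgap : fil (GapP k j) (σ.2.1 + zp (-(j:ℤ))*p*σ.2.2.2) = 0 := fil_gap_of_NPb hk hm h2
  rw [map_add] at hgap
  have hpgb : (pg k j σ.2.1 : L) = fil (GapP k j) σ.2.1 := rfl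
  -- muT σ = - phiV (fil PAp d)
  have hd : fil PAp σ.2.2.2 + fil nPA σ.2.2.2 = σ.2.2.2 := fil_add_fil_not PAp σ.2.2.2
  have key : pg k j σ.2.1 + phiV k j p (fil nPA σ.2.2.2)
      = - phiV k j p (fil PAp σ.2.2.2) := by
    have hphid : phiV k j p (fil PAp σ.2.2.2) + phiV k j p (fil nPA σ.2.2.2)
        = phiV k j p σ.2.2.2 := by rw [← map_add, hd]
    have hsum : pg k j σ.2.1 + phiV k j p σ.2.2.2 = 0 := by
      apply Subtype.ext
      have : (pg k j σ.2.1 : L) + (phiV k j p σ.2.2.2 : L) = 0 := by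
        rw [hpgb]
        rw [phiV, LinearMap.comp_apply, pg_coe, mulL_apply]
        exact hgap
      simpa using this
    have := congrArg (fun t => t - phiV k j p σ.2.2.2) hsum
    simp only [add_sub_cancel_right, zero_sub] at this
    rw [this, ← hphid]
    abel
  rw [key]
  refine Submodule.neg_mem _ ?_
  -- phiV (fil PAp d) ∈ Rst
  have hsplit := fil_split PAp (fun z : XX => z.2 < 2*j) σ.2.2.2
  have hkill : phiV k j p (fil (fun z => PAp z ∧ ¬ z.2 < 2*j) σ.2.2.2) = 0 :=
    phiV_kills_high p hk (fil_mem_sup' _ _ (true_mem_sup _) (fun z hP _ => hP.2))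
  have hstep : phiV k j p (fil PAp σ.2.2.2)
      = phiV k j p (fil (fun z => PAp z ∧ z.2 < 2*j) σ.2.2.2) := by
    rw [hsplit, map_add, hkill, add_zero]
  rw [hstep]
  refine ⟨fil (fun z => PAp z ∧ z.2 < 2*j) σ.2.2.2, ?_, rfl⟩
  -- membership in X0low
  rw [X0low, SetLike.mem_coe, mem_sup_iff]
  intro z hz
  by_cases hzP : PAp z ∧ z.2 < 2*j
  · rw [fil_apply_pos _ hzP]
    refine fil_eq_zero_iff.1 h4 z ⟨?_, by omega⟩
    intro hPV
    exact hz ⟨hzP.1, hPV, hzP.2⟩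
  · rw [fil_apply_neg _ hzP]

lemma fil_of_unsat {P : XX → Prop} (h : ∀ z, ¬ P z) (f : L) : fil P f = 0 := by
  ext x
  rw [fil_apply_neg _ (h x)]
  rfl

lemma empty_pattern {R : XX → Prop} (hR : ∀ z, R z → 0 ≤ z.1) (u y : L) :
    fil R (fil nPA u + (y - fil (fun z => 0 ≤ z.1 ∧ R z) y)) = 0 := by
  rw [map_add, map_sub]
  have t0 : fil R (fil nPA u) = 0 := fil_incompat (fun z hz hn => hn (hR z hz)) u
  have t2 : fil R (fil (fun z => 0 ≤ z.1 ∧ R z) y) = fil (fun z => 0 ≤ z.1 ∧ R z) y := by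
    rw [fil_fil]
    exact fil_congr (fun z => ⟨fun h => h.2, fun h => ⟨h.2, h⟩⟩) y
  have t3 : fil R y = fil (fun z => 0 ≤ z.1 ∧ R z) y := by
    rw [fil_split R (fun z => 0 ≤ z.1)]
    have h2 : fil (fun z => R z ∧ ¬ 0 ≤ z.1) y = 0 :=
      fil_of_unsat (fun z hz => hz.2 (hR z hz.1)) y
    rw [h2, add_zero]
    exact fil_congr (fun z => ⟨fun h => ⟨h.2, h.1⟩, fun h => ⟨h.2, h.1⟩⟩) y
  rw [t0, t2, t3]
  ring

lemma KK_mem_span {k j m : ℕ} {p : L} (hk : 1 ≤ k) (hm : 2*j ≤ m) (σ : T4)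
    (hσ : σ ∈ KK k j p) :
    mk4 m σ ∈ Submodule.span ℂ (Am4 m ∪ Wm k j m p) := by
  rw [KK, Submodule.mem_comap] at hσ
  set a' := fil (Pmp m) σ.1 with ha'
  set b' := fil (Pmp m) σ.2.1 with hb'
  set c' := fil (Pmp m) σ.2.2.1 with hc'
  set d' := fil (Pmp m) σ.2.2.2 with hd'
  have hmkeq : mk4 m (a', b', c', d') = mk4 m σ := by
    rw [mk4_apply, mk4_apply]
    simp only [ha', hb', hc', hd', mkm_fil]
  have hμeq : muT k j p (a', b', c', d') = muT k j p σ := by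
    rw [muT_apply, muT_apply]
    congr 1
    · apply Subtype.ext
      rw [pg_coe, pg_coe]
      show fil (GapP k j) b' = _
      rw [hb', fil_fil]
      exact fil_congr (fun z => ⟨fun h => h.1,
        fun h => ⟨h, by have := gap_r_lt hk h; omega⟩⟩) _
    · show phiV k j p (fil nPA d') = phiV k j p (fil nPA σ.2.2.2)
      have hfil : fil nPA d' = fil (fun z => nPA z ∧ Pmp m z) σ.2.2.2 := by
        rw [hd', fil_fil]
      have hsplit := fil_split nPA (Pmp m) σ.2.2.2
      have hkill : phiV k j p (fil (fun z => nPA z ∧ ¬ Pmp m z) σ.2.2.2) = 0 :=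
        phiV_kills_high_m p hk hm (fil_mem_sup' _ _ (true_mem_sup _) (fun z hP _ => hP.2))
      rw [hfil, hsplit, map_add, hkill, add_zero]
  rw [← hmkeq]
  have hμ : muT k j p (a', b', c', d') ∈ Rst k j p := by rw [hμeq]; exact hσ
  obtain ⟨x₀, hx₀, hφx₀⟩ := hμ
  set dW := fil nPA d' - x₀ with hdW
  set bW := fil nPA b'
    - fil (fun z => 0 ≤ z.1 ∧ NPb k j m z) (zp (-(j:ℤ))*p*dW) with hbW
  set cW := fil nPA c'
    - fil (fun z => 0 ≤ z.1 ∧ NP2V k j m z) (zp (j:ℤ)*p*dW) with hcW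
  set GG := zp (j:ℤ)*p*bW + zp (-(j:ℤ))*p*cW + p*p*dW with hGG
  set aW := fil nPA a' - fil (fun z => 0 ≤ z.1 ∧ NPV k m z) GG with haW
  -- the value of phi x₀
  have hval : fil (GapP k j) (zp (-(j:ℤ))*p * x₀)
      = fil (GapP k j) b' + fil (GapP k j) (zp (-(j:ℤ))*p * fil nPA d') := by
    rw [muT_apply] at hφx₀
    have h := congrArg Subtype.val hφx₀
    simpa [phiV, LinearMap.comp_apply, pg_coe, mulL_apply] using h
  -- W-membership of σW
  have hWmem : mk4 m (aW, bW, cW, dW) ∈ Wm k j m p := by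
    refine (mem_Wm_iff _).2 ⟨?_, ?_, ?_, ?_⟩
    · rw [C1_apply]
      have harg : aW + zp (j:ℤ)*p*bW + zp (-(j:ℤ))*p*cW + p*p*dW
          = fil nPA a' + (GG - fil (fun z => 0 ≤ z.1 ∧ NPV k m z) GG) := by
        rw [haW, hGG]; ring
      rw [harg]
      refine empty_pattern (fun z hz => ?_) a' GG
      have := kx2_nonneg k z
      omega
    · rw [C2_apply]
      show fil (NPb k j m) (bW + zp (-(j:ℤ))*p*dW) = 0
      have harg : bW + zp (-(j:ℤ))*p*dW
          = fil nPA b' + (zp (-(j:ℤ))*p*dW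
            - fil (fun z => 0 ≤ z.1 ∧ NPb k j m z) (zp (-(j:ℤ))*p*dW)) := by
        rw [hbW]; ring
      rw [harg, map_add, map_sub]
      have t1 : ∀ u : L, fil (NPb k j m) (fil nPA u) = fil (Pmp m) (fil (GapP k j) u) := by
        intro u
        rw [fil_fil, fil_fil]
        exact fil_congr (fun z => by tauto) u
      have t2 : fil (NPb k j m) (fil (fun z => 0 ≤ z.1 ∧ NPb k j m z) (zp (-(j:ℤ))*p*dW))
          = fil (fun z => 0 ≤ z.1 ∧ NPb k j m z) (zp (-(j:ℤ))*p*dW) := by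
        rw [fil_fil]
        exact fil_congr (fun z => ⟨fun h => h.2, fun h => ⟨h.2, h⟩⟩) _
      have t3 : fil (NPb k j m) (zp (-(j:ℤ))*p*dW)
          = fil (fun z => 0 ≤ z.1 ∧ NPb k j m z) (zp (-(j:ℤ))*p*dW)
            + fil (Pmp m) (fil (GapP k j) (zp (-(j:ℤ))*p*dW)) := by
        rw [fil_split (NPb k j m) (fun z => 0 ≤ z.1) (zp (-(j:ℤ))*p*dW), fil_fil]
        congr 1
        · exact fil_congr (fun z => by tauto) _
        · exact fil_congr (fun z => by tauto) _
      rw [t1 b', t2, t3]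
      have t4 : fil (GapP k j) b' + fil (GapP k j) (zp (-(j:ℤ))*p*dW) = 0 := by
        have hqd : zp (-(j:ℤ))*p*dW = zp (-(j:ℤ))*p*fil nPA d' - zp (-(j:ℤ))*p*x₀ := by
          rw [hdW]; ring
        rw [hqd, map_sub, hval]
        ring
      have t5 : fil (Pmp m) (fil (GapP k j) b')
            + fil (Pmp m) (fil (GapP k j) (zp (-(j:ℤ))*p*dW)) = 0 := by
        rw [← map_add, t4, map_zero]
      linear_combination t5
    · rw [C3_apply]
      show fil (NP2V k j m) (cW + zp (j:ℤ)*p*dW) = 0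
      have harg : cW + zp (j:ℤ)*p*dW
          = fil nPA c' + (zp (j:ℤ)*p*dW
            - fil (fun z => 0 ≤ z.1 ∧ NP2V k j m z) (zp (j:ℤ)*p*dW)) := by
        rw [hcW]; ring
      rw [harg]
      refine empty_pattern (fun z hz => ?_) c' _
      have h1 := kx2_nonneg k z
      have h2 : (0:ℤ) ≤ 2*(j:ℤ) := by positivity
      omega
    · rw [C4_apply]
      show fil (NPV k m) dW = 0
      rw [hdW, map_sub]
      have t0 : fil (NPV k m) (fil nPA d') = 0 :=
        fil_incompat (fun z hz hn => by have := kx2_nonneg k z; omega) d'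
      have t1 : fil (NPV k m) x₀ = 0 :=
        fil_eq_zero_of_sup (hx₀ : x₀ ∈ X0low k j) (fun z hz hN => hN.1 hz.2.1)
      rw [t0, t1, sub_zero]
  -- A-membership of σ' - σW
  have hAmem : ∀ (u w : L), u - (fil nPA u - w) = fil PAp u + w := by
    intro u w
    have h := fil_add_fil_not PAp u
    have hc : fil (fun z : XX => ¬ PAp z) u = fil nPA u := fil_congr (fun z => Iff.rfl) u
    rw [hc] at h
    have h2 : u - fil nPA u = fil PAp u := (eq_sub_of_add_eq h).symm
    calc u - (fil nPA u - w) = (u - fil nPA u) + w := by ring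
      _ = fil PAp u + w := by rw [h2]
  have hAmem4 : mk4 m ((a', b', c', d') - (aW, bW, cW, dW)) ∈ Am4 m := by
    have hmemA : ∀ (u : L) (Q : XX → Prop) (hQ : ∀ z, Q z → 0 ≤ z.1) (y : L),
        u - (fil nPA u - fil Q y) ∈ sup PAp := by
      intro u Q hQ y
      rw [hAmem u (fil Q y)]
      exact add_mem (fil_mem_sup PAp u) (sup_mono hQ (fil_mem_sup Q y))
    refine ⟨?_, ?_, ?_, ?_⟩
    · refine mem_Am_iff.2 ⟨a' - aW, ?_, rfl⟩
      rw [haW]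
      exact hmemA a' _ (fun z hz => hz.1) GG
    · refine mem_Am_iff.2 ⟨b' - bW, ?_, rfl⟩
      rw [hbW]
      exact hmemA b' _ (fun z hz => hz.1) _
    · refine mem_Am_iff.2 ⟨c' - cW, ?_, rfl⟩
      rw [hcW]
      exact hmemA c' _ (fun z hz => hz.1) _
    · refine mem_Am_iff.2 ⟨d' - dW, ?_, rfl⟩
      have : d' - dW = fil PAp d' + x₀ := by rw [hdW]; exact hAmem d' x₀
      rw [this]
      refine add_mem (fil_mem_sup PAp d') ?_
      exact sup_mono (fun z hz => hz.1) (hx₀ : x₀ ∈ X0low k j)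
  have hsplit4 : (a', b', c', d') = ((a', b', c', d') - (aW, bW, cW, dW)) + (aW, bW, cW, dW) := by
    ring
  rw [hsplit4, map_add]
  exact Submodule.add_mem _
    (Submodule.subset_span (Set.mem_union_left _ hAmem4))
    (Submodule.subset_span (Set.mem_union_right _ hWmem))

lemma span_union_eq {k j m : ℕ} {p : L} (hk : 1 ≤ k) (hm : 2*j ≤ m) :
    Submodule.span ℂ (Am4 m ∪ Wm k j m p) = Submodule.map (mk4 m) (KK k j p) := by
  apply le_antisymm
  · rw [Submodule.span_le]
    rintro x (hx | hx)
    · exact Am4_mem_map hx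
    · exact Wm_mem_map hk hm hx
  · rintro x ⟨σ, hσ, rfl⟩
    exact KK_mem_span hk hm σ hσ
-- ### quotient equivalences for H1
lemma ker_mk4_le_KK {k j m : ℕ} {p : L} (hk : 1 ≤ k) (hm : 2*j ≤ m) :
    LinearMap.ker (mk4 m) ≤ KK k j p := by
  intro σ hσ
  rw [LinearMap.mem_ker, mk4_apply, Prod.ext_iff, Prod.ext_iff, Prod.ext_iff] at hσ
  obtain ⟨h1, h2, h3, h4⟩ := hσ
  simp only at h1 h2 h3 h4
  have hb : σ.2.1 ∈ sup (fun z => ¬ z.2 ≤ m) :=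
    mem_sup_iff.2 (fun z hz => mk_eq_zero_iff m _ |>.1 h2 z (not_not.1 hz))
  have hd : σ.2.2.2 ∈ sup (fun z => ¬ z.2 ≤ m) :=
    mem_sup_iff.2 (fun z hz => mk_eq_zero_iff m _ |>.1 h4 z (not_not.1 hz))
  rw [KK, Submodule.mem_comap, muT_apply]
  have hpg : pg k j σ.2.1 = 0 := by
    rw [pg_eq_zero_iff]
    exact fil_eq_zero_of_sup hb (fun z hz hgap => hz (by have := gap_r_lt hk hgap; omega))
  have hphi : phiV k j p (fil nPA σ.2.2.2) = 0 := by
    refine phiV_kills_high_m p hk hm ?_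
    exact fil_mem_sup' _ _ hd (fun z _ hQ => hQ)
  rw [hpg, hphi, add_zero]
  exact zero_mem _

lemma muT_surj (k j : ℕ) (p : L) : Function.Surjective (muT k j p) := by
  intro v
  refine ⟨(0, (v : L), 0, 0), ?_⟩
  rw [muT_apply]
  have h1 : fil nPA (0 : L) = 0 := map_zero _
  show pg k j (v : L) + phiV k j p (fil nPA (0:L)) = v
  rw [h1, map_zero, add_zero]
  apply Subtype.ext
  rw [pg_coe]
  exact fil_of_mem_sup v.2

lemma eq_zero_of_supAm_mk {m : ℕ} {g : L} (hg : g ∈ supAm m) (h0 : mkm m g = 0) : g = 0 := by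
  ext x
  by_cases hx2 : x.2 ≤ m
  · exact (mk_eq_zero_iff m g).1 h0 x hx2
  · exact mem_sup_iff.1 hg x (fun hc => hx2 hc.2)

lemma H1_finrank {k j m : ℕ} {p : L} (hk : 1 ≤ k) (hm : 2*j ≤ m) :
    Module.finrank ℂ (H1m k j m p) = Module.finrank ℂ ((GapV k j) ⧸ (Rst k j p)) := by
  have hspan := span_union_eq (m := m) (p := p) hk hm
  have hKKle : KK k j p ≤ Submodule.comap (mk4 m) (Submodule.span ℂ (Am4 m ∪ Wm k j m p)) := by
    rw [hspan]
    exact Submodule.le_comap_map _ _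
  let f1 : (T4 ⧸ KK k j p) →ₗ[ℂ] (H1m k j m p) :=
    Submodule.mapQ _ _ (mk4 m) hKKle
  have hf1surj : Function.Surjective f1 := by
    intro z
    obtain ⟨y, rfl⟩ := Submodule.Quotient.mk_surjective _ z
    obtain ⟨σ, rfl⟩ := mk4_surj m y
    exact ⟨Submodule.Quotient.mk σ, by rw [Submodule.mapQ_apply]⟩
  have hf1inj : Function.Injective f1 := by
    rw [injective_iff_map_eq_zero]
    intro x hx
    obtain ⟨σ, rfl⟩ := Submodule.Quotient.mk_surjective _ x
    rw [Submodule.mapQ_apply, Submodule.Quotient.mk_eq_zero, hspan] at hx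
    obtain ⟨τ, hτ, he⟩ := hx
    have hker : σ - τ ∈ LinearMap.ker (mk4 m) := by
      rw [LinearMap.mem_ker, map_sub, he, sub_self]
    have : σ ∈ KK k j p := by
      have := Submodule.add_mem (KK k j p) hτ (ker_mk4_le_KK hk hm hker)
      simpa using this
    rwa [Submodule.Quotient.mk_eq_zero]
  let f2 : (T4 ⧸ KK k j p) →ₗ[ℂ] ((GapV k j) ⧸ (Rst k j p)) :=
    Submodule.mapQ _ _ (muT k j p) (le_of_eq rfl)
  have hf2surj : Function.Surjective f2 := by
    intro z
    obtain ⟨v, rfl⟩ := Submodule.Quotient.mk_surjective _ z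
    obtain ⟨σ, rfl⟩ := muT_surj k j p v
    exact ⟨Submodule.Quotient.mk σ, by rw [Submodule.mapQ_apply]⟩
  have hf2inj : Function.Injective f2 := by
    rw [injective_iff_map_eq_zero]
    intro x hx
    obtain ⟨σ, rfl⟩ := Submodule.Quotient.mk_surjective _ x
    rw [Submodule.mapQ_apply, Submodule.Quotient.mk_eq_zero] at hx
    rw [Submodule.Quotient.mk_eq_zero]
    exact Submodule.mem_comap.2 hx
  have e1 := LinearEquiv.ofBijective f1 ⟨hf1inj, hf1surj⟩
  have e2 := LinearEquiv.ofBijective f2 ⟨hf2inj, hf2surj⟩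
  exact (e1.symm.trans e2).finrank_eq

lemma H0_finrank {k j m : ℕ} {p : L} (hk : 1 ≤ k) (hm : 2*j ≤ m) :
    Module.finrank ℂ (H0m k j m p) =
      Module.finrank ℂ (X0 k m) + Module.finrank ℂ (X2b k j m)
      + Module.finrank ℂ (X2c k j m) + Module.finrank ℂ (Kp k j m p) := by
  rw [H0m_eq_map]
  obtain ⟨e⟩ := nn0_equiv_d4 (m := m) (p := p) hk hm
  haveI : FiniteDimensional ℂ (NN0 k j m p) := Module.Finite.equiv e.symm
  have hrn := LinearMap.finrank_range_add_finrank_ker ((mk4 m).domRestrict (NN0 k j m p))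
  have hker : LinearMap.ker ((mk4 m).domRestrict (NN0 k j m p)) = ⊥ := by
    rw [Submodule.eq_bot_iff]
    rintro ⟨σ, hσ⟩ hk0
    rw [LinearMap.mem_ker, LinearMap.domRestrict_apply] at hk0
    rw [mk4_apply, Prod.ext_iff, Prod.ext_iff, Prod.ext_iff] at hk0
    obtain ⟨h1, h2, h3, h4⟩ := hk0
    simp only at h1 h2 h3 h4
    rw [mem_NN0_iff] at hσ
    apply Subtype.ext
    show σ = 0
    have e1 := eq_zero_of_supAm_mk hσ.1 h1
    have e2 := eq_zero_of_supAm_mk hσ.2.1 h2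
    have e3 := eq_zero_of_supAm_mk hσ.2.2.1 h3
    have e4 := eq_zero_of_supAm_mk hσ.2.2.2.1 h4
    exact Prod.ext e1 (Prod.ext e2 (Prod.ext e3 e4))
  rw [range_domRestrict', hker] at hrn
  have : Module.finrank ℂ (Submodule.map (mk4 m) (NN0 k j m p))
      = Module.finrank ℂ (NN0 k j m p) := by
    rw [← hrn]
    simp
  rw [this, e.finrank_eq, finrank_D4]

lemma phiV_zero (k j : ℕ) : phiV k j (0 : L) = 0 := by
  apply LinearMap.ext
  intro f
  have : (zp (-(j:ℤ)) * (0:L)) * f = 0 := by rw [mul_zero, zero_mul]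
  rw [phiV, LinearMap.comp_apply, mulL_apply, this, map_zero, LinearMap.zero_apply]

lemma Rst_zero (k j : ℕ) : Rst k j 0 = ⊥ := by
  rw [Rst, phiV_zero]
  exact Submodule.map_zero _

lemma Kp_zero (k j m : ℕ) : Kp k j m 0 = X0 k m := by
  rw [Kp, phiV_zero, LinearMap.ker_zero, inf_top_eq]

/-- For `p ∈ L` divisible by `u` with `z⁻ʲp` V-holomorphic, the sequence
`m ↦ dim H¹_m(p)` is eventually constant with limit `h¹(p)`, the sequence
`m ↦ dim H⁰_m(0) − dim H⁰_m(p)` is eventually constant with limit `Δ(p) ≥ 0`, and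
`Δ(p) + h¹(p) = h¹(0)`. -/
theorem endE_delta_plus_h1_eq_h1_split (k : ℕ) (hk : 1 ≤ k) (j : ℕ) (p : L)
    (hu : ∀ (s : ℤ) (r : ℕ), p.coeff (s, r) ≠ 0 → 1 ≤ r)
    (hpV : VHol k (zp (-(j : ℤ)) * p)) :
    ∃ (N : ℕ) (h1p h1split : ℕ) (Δ : ℤ),
      (∀ m, N ≤ m → Module.finrank ℂ (H1m k j m p) = h1p) ∧
      (∀ m, N ≤ m → Module.finrank ℂ (H1m k j m 0) = h1split) ∧
      (∀ m, N ≤ m →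
        (Module.finrank ℂ (H0m k j m 0) : ℤ) - Module.finrank ℂ (H0m k j m p) = Δ) ∧
      0 ≤ Δ ∧ Δ + h1p = h1split := by
  haveI hGfd : FiniteDimensional ℂ (GapV k j) := GapV_findim hk
  refine ⟨2*j, Module.finrank ℂ ((GapV k j) ⧸ (Rst k j p)), Module.finrank ℂ (GapV k j),
    (Module.finrank ℂ (Rst k j p) : ℤ), ?_, ?_, ?_, ?_, ?_⟩
  · intro m hm
    exact H1_finrank hk hm
  · intro m hm
    rw [H1_finrank hk hm]
    exact (Submodule.quotEquivOfEqBot _ (Rst_zero k j)).finrank_eq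
  · intro m hm
    have h0 := H0_finrank (k := k) (j := j) (m := m) (p := (0 : L)) hk hm
    have hp := H0_finrank (k := k) (j := j) (m := m) (p := p) hk hm
    rw [Kp_zero] at h0
    have hsplit := finrank_X0_split k j m p
    rw [map_phiV_X0_eq_Rst p hk hm] at hsplit
    rw [h0, hp]
    push_cast
    omega
  · exact Int.ofNat_nonneg _
  · have hq := Submodule.finrank_quotient_add_finrank (Rst k j p)
    push_cast
    omega
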